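/- arXiv:1206.4737 — 4 statements merged into one kernel-verified Lean document; each statement's English description precedes it below -/
import Mathlib

section
/- Suppose |c(q,n)| \leq K for all n, where K \geq 1. Then for all |t| \geq 1 and all n \geq 0, |s_n(t)| \leq \prod_{k=0}^n (1+q^k) \cdot A_q(-K/|t|^2). -/
/-!
Write `A(x) = A_q(-x) = ∑ q^{k²} x^k / (q;q)_k`. For `x ≥ 0` all terms are nonnegative, so
`A ≥ 1` and `A` is increasing, and comparing terms gives the `q`-difference equation
`A(x) = A(qx) + qx A(q²x)`. Put `x = K/|t|²` and `P_n = ∏_{k ≤ n} (1 + q^k)`. The recurrence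
evaluates `s_{n+1}`, `s_n` at `q^{-1/2} t`, `q^{-1} t`, which still have modulus `≥ 1` and
replace `x` by `qx`, `q²x`; so by induction on `n`,
`|s_{n+2}(t)| ≤ (1 + q^{n+2}) P_{n+1} A(qx) + qx P_n A(q²x)`
`           ≤ P_{n+1} (A(x) + q^{n+2} A(qx)) ≤ P_{n+2} A(x)`.
-/

/-- The q-Airy function at a real argument:
`A_q(x) = ∑_{k≥0} q^{k²}(-x)^k/(q;q)_k`. -/
noncomputable def qAiryR (q x : ℝ) : ℝ :=
  ∑' k : ℕ, q ^ (k ^ 2) * (-x) ^ k / ∏ j ∈ Finset.range k, (1 - q ^ (j + 1))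

/-- The functions `s_n` defined by `s_{-1} = 0`, `s_0 = 1` and the recurrence
`(1 - qⁿ/t²) s_n(t) = s_{n+1}(q^{1/2} t) + t^{-2} c(q,n) s_{n-1}(q^{-1/2} t)`. -/
noncomputable def sFun (q : ℝ) (c : ℕ → ℂ) : ℕ → ℂ → ℂ
  | 0 => fun _ => 1
  | 1 => fun u => 1 - (q : ℂ) / u ^ 2
  | (n + 2) => fun u =>
      (1 - (q : ℂ) ^ (n + 2) / u ^ 2) * sFun q c (n + 1) (((Real.sqrt q : ℂ))⁻¹ * u)
        - (q : ℂ) / u ^ 2 * c (n + 1) * sFun q c n (((q : ℂ))⁻¹ * u)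

open Finset Filter Topology

namespace QAiry

variable {q : ℝ}

noncomputable def term (q z : ℝ) (k : ℕ) : ℝ :=
  q ^ (k ^ 2) * (-z) ^ k / ∏ j ∈ range k, (1 - q ^ (j + 1))

theorem one_sub_pow_succ_pos (hq : |q| < 1) (j : ℕ) : 0 < 1 - q ^ (j + 1) :=
  sub_pos.2 <| (le_abs_self _).trans_lt <| by
    rw [abs_pow]; exact pow_lt_one₀ (abs_nonneg q) hq j.succ_ne_zero

theorem prod_one_sub_pow_pos (hq : |q| < 1) (k : ℕ) :
    0 < ∏ j ∈ range k, (1 - q ^ (j + 1)) :=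
  prod_pos fun j _ ↦ one_sub_pow_succ_pos hq j

theorem term_zero (z : ℝ) : term q z 0 = 1 := by simp [term]

theorem term_succ (hq : |q| < 1) (z : ℝ) (k : ℕ) :
    term q z (k + 1) = -(q ^ (2 * k + 1) * z / (1 - q ^ (k + 1))) * term q z k := by
  have := (one_sub_pow_succ_pos hq k).ne'
  have := (prod_one_sub_pow_pos hq k).ne'
  rw [term, term, prod_range_succ, show (k + 1) ^ 2 = k ^ 2 + (2 * k + 1) by ring,
    pow_add q (k ^ 2)]
  field_simp
  ring

theorem term_succ_sub_term_succ (hq : |q| < 1) (z : ℝ) (k : ℕ) :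
    term q z (k + 1) - term q (q * z) (k + 1) = -(q * z) * term q (q ^ 2 * z) k := by
  have := (one_sub_pow_succ_pos hq k).ne'
  have := (prod_one_sub_pow_pos hq k).ne'
  rw [term, term, term, prod_range_succ, show (k + 1) ^ 2 = k ^ 2 + (2 * k + 1) by ring,
    pow_add q (k ^ 2)]
  field_simp
  ring

theorem tendsto_term_ratio (hq : |q| < 1) (z : ℝ) :
    Tendsto (fun k : ℕ ↦ q ^ (2 * k + 1) * z / (1 - q ^ (k + 1))) atTop (𝓝 0) := by
  have hpow := tendsto_pow_atTop_nhds_zero_of_abs_lt_one hq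
  have hnum : Tendsto (fun k : ℕ ↦ q ^ (2 * k + 1) * z) atTop (𝓝 0) := by
    have h2k : Tendsto (fun k : ℕ ↦ 2 * k + 1) atTop atTop :=
      tendsto_atTop_mono (fun k ↦ by simp; omega) tendsto_id
    simpa using (hpow.comp h2k).mul_const z
  have hden : Tendsto (fun k : ℕ ↦ 1 - q ^ (k + 1)) atTop (𝓝 1) := by
    simpa using (hpow.comp (tendsto_add_atTop_nat 1)).const_sub 1
  have h := hnum.div hden one_ne_zero
  rwa [zero_div] at h

theorem summable_term (hq : |q| < 1) (z : ℝ) : Summable (term q z) := by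
  refine summable_of_ratio_norm_eventually_le (r := 1 / 2) (by norm_num) ?_
  have hsmall : ‖(0 : ℝ)‖ < 1 / 2 := by norm_num
  filter_upwards [(tendsto_term_ratio hq z).norm.eventually_le_const hsmall] with k hk
  rw [term_succ hq, norm_mul, norm_neg]
  exact mul_le_mul_of_nonneg_right hk (norm_nonneg _)

end QAiry

open QAiry

theorem qAiryR_eq_tsum (q z : ℝ) : qAiryR q z = ∑' k, term q z k := rfl

theorem qAiryR_eq_sub {q : ℝ} (hq : |q| < 1) (z : ℝ) :
    qAiryR q z = qAiryR q (q * z) - q * z * qAiryR q (q ^ 2 * z) := by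
  have hdiff := (summable_term hq z).sub (summable_term hq (q * z))
  have h := hdiff.tsum_eq_zero_add
  simp only [term_zero, sub_self, zero_add, term_succ_sub_term_succ hq, tsum_mul_left] at h
  rw [(summable_term hq z).tsum_sub (summable_term hq (q * z))] at h
  simp only [qAiryR_eq_tsum]
  linarith

section Nonneg

variable {q : ℝ} (hq0 : 0 ≤ q) (hq : |q| < 1)
include hq0 hq

theorem QAiry.term_nonneg {z : ℝ} (hz : z ≤ 0) (k : ℕ) : 0 ≤ term q z k :=
  have := prod_one_sub_pow_pos hq k
  div_nonneg (mul_nonneg (pow_nonneg hq0 _) (pow_nonneg (neg_nonneg.2 hz) _)) this.le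

theorem one_le_qAiryR {z : ℝ} (hz : z ≤ 0) : 1 ≤ qAiryR q z := by
  rw [qAiryR_eq_tsum, ← term_zero (q := q) z]
  exact (summable_term hq z).le_tsum 0 fun k _ ↦ term_nonneg hq0 hq hz k

theorem antitoneOn_qAiryR : AntitoneOn (qAiryR q) (Set.Iic 0) := by
  intro y _ z hz hyz
  refine (summable_term hq z).tsum_le_tsum (fun k ↦ ?_) (summable_term hq y)
  have := prod_one_sub_pow_pos hq k
  gcongr
  exact neg_nonneg.2 hz

/-- In the induction of `sFun_bound`, `a`, `b`, `ε` stand for `P_n`, `P_{n+1}`, `q^{n+2}`. -/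
theorem qAiryR_bound_step {z a b ε : ℝ} (hz : z ≤ 0) (ha : 0 ≤ a) (hab : a ≤ b) (hε : 0 ≤ ε) :
    (1 + ε) * (b * qAiryR q (q * z)) + q * -z * (a * qAiryR q (q ^ 2 * z)) ≤
      b * (1 + ε) * qAiryR q z := by
  have hqz : q * z ≤ 0 := mul_nonpos_of_nonneg_of_nonpos hq0 hz
  have hq2z : q ^ 2 * z ≤ 0 := mul_nonpos_of_nonneg_of_nonpos (sq_nonneg q) hz
  have hA₂ : 0 ≤ qAiryR q (q ^ 2 * z) := zero_le_one.trans (one_le_qAiryR hq0 hq hq2z)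
  have hqz' : 0 ≤ q * -z := mul_nonneg hq0 (neg_nonneg.2 hz)
  have hA₁ : qAiryR q (q * z) ≤ qAiryR q z :=
    antitoneOn_qAiryR hq0 hq hz hqz (by nlinarith [le_abs_self q])
  calc (1 + ε) * (b * qAiryR q (q * z)) + q * -z * (a * qAiryR q (q ^ 2 * z))
      ≤ (1 + ε) * (b * qAiryR q (q * z)) + q * -z * (b * qAiryR q (q ^ 2 * z)) := by
        gcongr
    _ = b * qAiryR q z + ε * b * qAiryR q (q * z) := by
        rw [qAiryR_eq_sub hq z]; ring
    _ ≤ b * (1 + ε) * qAiryR q z := by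
        have := mul_le_mul_of_nonneg_left hA₁ (mul_nonneg hε (ha.trans hab))
        linarith

end Nonneg

theorem norm_ofReal_div_sq {a : ℝ} (ha : 0 ≤ a) (t : ℂ) : ‖(a : ℂ) / t ^ 2‖ = a / ‖t‖ ^ 2 := by
  rw [norm_div, norm_pow, Complex.norm_of_nonneg ha]

theorem norm_one_sub_ofReal_div_sq_le {a : ℝ} (ha : 0 ≤ a) {t : ℂ} (ht : 1 ≤ ‖t‖) :
    ‖1 - (a : ℂ) / t ^ 2‖ ≤ 1 + a := by
  refine (norm_sub_le _ _).trans ?_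
  rw [norm_one, norm_ofReal_div_sq ha]
  gcongr
  exact div_le_self ha (one_le_pow₀ ht)

theorem one_le_norm_inv_ofReal_mul {a : ℝ} (ha : 0 < a) (ha1 : a ≤ 1) {t : ℂ} (ht : 1 ≤ ‖t‖) :
    1 ≤ ‖(a : ℂ)⁻¹ * t‖ := by
  rw [norm_mul, norm_inv, Complex.norm_of_nonneg ha.le, inv_mul_eq_div]
  exact ht.trans (le_div_self (by linarith) ha ha1)

theorem neg_div_sq_norm_inv_ofReal_mul {a : ℝ} (ha : 0 < a) (K : ℝ) (t : ℂ) :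
    -(K / ‖(a : ℂ)⁻¹ * t‖ ^ 2) = a ^ 2 * -(K / ‖t‖ ^ 2) := by
  rw [norm_mul, norm_inv, Complex.norm_of_nonneg ha.le]
  field_simp

theorem norm_sFun_add_two_le {q : ℝ} (hq0 : 0 ≤ q) {c : ℕ → ℂ} {K : ℝ} {n : ℕ}
    (hc : ‖c (n + 1)‖ ≤ K) {t : ℂ} (ht : 1 ≤ ‖t‖) :
    ‖sFun q c (n + 2) t‖ ≤
      (1 + q ^ (n + 2)) * ‖sFun q c (n + 1) ((Real.sqrt q : ℂ)⁻¹ * t)‖ +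
        q * (K / ‖t‖ ^ 2) * ‖sFun q c n ((q : ℂ)⁻¹ * t)‖ := by
  rw [sFun]
  refine (norm_sub_le _ _).trans ?_
  rw [norm_mul, norm_mul, norm_mul, norm_ofReal_div_sq hq0, ← Complex.ofReal_pow]
  have hcoef : q / ‖t‖ ^ 2 * ‖c (n + 1)‖ ≤ q * (K / ‖t‖ ^ 2) := by
    rw [div_mul_eq_mul_div, mul_div_assoc]
    gcongr
  gcongr
  exact norm_one_sub_ofReal_div_sq_le (pow_nonneg hq0 _) ht

theorem monotone_prod_range_one_add_pow {q : ℝ} (hq0 : 0 ≤ q) :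
    Monotone fun n ↦ ∏ k ∈ range n, (1 + q ^ k) :=
  monotone_nat_of_le_succ fun n ↦ by
    rw [prod_range_succ]
    exact le_mul_of_one_le_right (prod_nonneg fun k _ ↦ by positivity)
      (le_add_of_nonneg_right (pow_nonneg hq0 n))

theorem sFun_bound_general (q : ℝ) (hq0 : 0 < q) (hq1 : q < 1) (K : ℝ)
    (c : ℕ → ℂ) (hc : ∀ n, ‖c n‖ ≤ K) :
    ∀ t : ℂ, 1 ≤ ‖t‖ → ∀ n : ℕ,
      ‖sFun q c n t‖ ≤
        (∏ k ∈ Finset.range (n + 1), (1 + q ^ k)) * qAiryR q (-(K / ‖t‖ ^ 2)) := by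
  have hq : |q| < 1 := by rwa [abs_of_pos hq0]
  have hK : 0 ≤ K := (norm_nonneg _).trans (hc 0)
  have hz : ∀ t : ℂ, -(K / ‖t‖ ^ 2) ≤ 0 := fun t ↦ neg_nonpos.2 (by positivity)
  have hA : ∀ t : ℂ, 1 ≤ qAiryR q (-(K / ‖t‖ ^ 2)) := fun t ↦ one_le_qAiryR hq0.le hq (hz t)
  intro t ht n
  induction n using Nat.twoStepInduction generalizing t with
  | zero =>
    rw [sFun, norm_one, prod_range_one, pow_zero]
    linarith [hA t]
  | one =>
    calc ‖sFun q c 1 t‖ ≤ 1 + q := norm_one_sub_ofReal_div_sq_le hq0.le ht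
      _ ≤ _ := by
        rw [prod_range_succ, prod_range_one, pow_zero, pow_one]
        nlinarith [hA t]
  | more n ih₀ ih₁ =>
    have hsq : 0 < Real.sqrt q := Real.sqrt_pos.2 hq0
    have h₁ := ih₁ _ (one_le_norm_inv_ofReal_mul hsq (Real.sqrt_le_one.2 hq1.le) ht)
    have h₀ := ih₀ _ (one_le_norm_inv_ofReal_mul hq0 hq1.le ht)
    rw [neg_div_sq_norm_inv_ofReal_mul hsq, Real.sq_sqrt hq0.le] at h₁
    rw [neg_div_sq_norm_inv_ofReal_mul hq0] at h₀
    have hstep := qAiryR_bound_step hq0.le hq (hz t) (prod_nonneg fun k _ ↦ by positivity)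
      (monotone_prod_range_one_add_pow hq0.le (n + 1).le_succ) (pow_nonneg hq0.le (n + 2))
    rw [neg_neg, ← prod_range_succ] at hstep
    calc ‖sFun q c (n + 2) t‖ ≤ _ := norm_sFun_add_two_le hq0.le (hc _) ht
      _ ≤ _ := by gcongr
      _ ≤ _ := hstep

/-- if `|c(q,n)| ≤ K` for all `n`, with `K ≥ 1`, then for all `|t| ≥ 1`
and all `n ≥ 0`, `|s_n(t)| ≤ ∏_{k=0}^n (1 + q^k) · A_q(-K/|t|²)`. -/
theorem sFun_bound (q : ℝ) (hq0 : 0 < q) (hq1 : q < 1) (K : ℝ) (hK : 1 ≤ K)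
    (c : ℕ → ℂ) (hc : ∀ n, ‖c n‖ ≤ K) :
    ∀ t : ℂ, 1 ≤ ‖t‖ → ∀ n : ℕ,
      ‖sFun q c n t‖ ≤
        (∏ k ∈ Finset.range (n + 1), (1 + q ^ k)) * qAiryR q (-(K / ‖t‖ ^ 2)) :=
  sFun_bound_general q hq0 hq1 K c hc
end

section
/- Suppose a doubly-indexed bounded family a_{n,k} (|a_{n,k}| \leq M) satisfies a_{n+1,k} - a_{n+l+1,k} = q^k(a_{n,k} - a_{n+l,k}) - q^{n+k}(a_{n,k-1} - q^l a_{n+l,k-1}) - q^{2k-1}[c(q,n)a_{n-1,k-1} - c(q,n+l)a_{n+l-1,k-1}] for all large n and all l \geq 0, where c(q,n) \to 1 and for fixed k-1 the sequence (a_{n,k-1})_n converges. Then for fixed k \geq 1 the sequence (a_{n,k})_n is Cauchy, hence converges. -/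
/-!
Write `x n = a n k` and `g n = c n * a (n - 1) (k - 1)`. Since `g → L`, the relation says that the
tail differences `x n - x (n + l)` contract by the factor `q ^ k < 1` at each step, up to an error
`O(q ^ n) + ‖g n - g (n + l)‖` which is small uniformly in `l`. Boundedness of `x` then forces the
tail differences to become small uniformly in `l`, which is the Cauchy property.
-/

open Filter

theorem cauchySeq_iff_forall_eventually_norm_sub_add_le {E : Type*} [SeminormedAddCommGroup E]
    {x : ℕ → E} : CauchySeq x ↔ ∀ ε > 0, ∀ᶠ n in atTop, ∀ l, ‖x n - x (n + l)‖ ≤ ε := by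
  constructor
  · intro hx ε hε
    obtain ⟨N, hN⟩ := Metric.cauchySeq_iff.1 hx ε hε
    filter_upwards [eventually_ge_atTop N] with n hn l
    rw [← dist_eq_norm]
    exact (hN n hn (n + l) (by omega)).le
  · intro hx
    refine Metric.cauchySeq_iff'.2 fun ε hε => ?_
    obtain ⟨N, hN⟩ := eventually_atTop.1 (hx (ε / 2) (half_pos hε))
    refine ⟨N, fun n hn => ?_⟩
    obtain ⟨l, rfl⟩ : ∃ l, n = N + l := ⟨n - N, by omega⟩
    rw [dist_comm, dist_eq_norm]
    exact (hN N le_rfl l).trans_lt (half_lt_self hε)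

theorem eventually_forall_le_of_le_mul_add {ι : Type*} {u : ℕ → ι → ℝ} {r B : ℝ}
    (hr0 : 0 ≤ r) (hr1 : r < 1) (hB : ∀ n i, u n i ≤ B)
    (hstep : ∀ δ > 0, ∀ᶠ n in atTop, ∀ i, u (n + 1) i ≤ r * u n i + δ) :
    ∀ ε > 0, ∀ᶠ n in atTop, ∀ i, u n i ≤ ε := by
  intro ε hε
  obtain ⟨N, hN⟩ := eventually_atTop.1 (hstep ((1 - r) * (ε / 2)) (by nlinarith))
  have hpow : ∀ᶠ m in atTop, r ^ m * B ≤ ε / 2 :=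
    ((tendsto_pow_atTop_nhds_zero_of_lt_one hr0 hr1).mul_const B).eventually
      (ge_mem_nhds (by simpa using half_pos hε))
  obtain ⟨m₀, hm₀⟩ := eventually_atTop.1 hpow
  refine eventually_atTop.2 ⟨N + m₀, fun n hn i => ?_⟩
  obtain ⟨m, rfl⟩ : ∃ m, n = N + m := ⟨n - N, by omega⟩
  -- `ε / 2` is the fixed point of `t ↦ r * t + (1 - r) * (ε / 2)`
  have hgeom : u (N + m) i - ε / 2 ≤ r ^ m * (u N i - ε / 2) :=
    le_geom (u := fun j => u (N + j) i - ε / 2) hr0 m fun j _ => by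
      have := hN (N + j) (by omega) i
      rw [← add_assoc]
      linear_combination this
  have hB' : r ^ m * (u N i - ε / 2) ≤ r ^ m * B :=
    mul_le_mul_of_nonneg_left (by linarith [hB N i]) (pow_nonneg hr0 m)
  linarith [hm₀ m (by omega)]

theorem cauchySeq_of_norm_sub_le_mul_add {E : Type*} [SeminormedAddCommGroup E] {x : ℕ → E}
    {M r : ℝ} (hx : ∀ n, ‖x n‖ ≤ M) (hr0 : 0 ≤ r) (hr1 : r < 1)
    (hstep : ∀ δ > 0, ∀ᶠ n in atTop, ∀ l,
      ‖x (n + 1) - x (n + l + 1)‖ ≤ r * ‖x n - x (n + l)‖ + δ) :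
    CauchySeq x := by
  refine cauchySeq_iff_forall_eventually_norm_sub_add_le.2 <|
    eventually_forall_le_of_le_mul_add (u := fun n l => ‖x n - x (n + l)‖) (B := 2 * M)
      hr0 hr1 (fun n l => ?_) fun δ hδ => ?_
  · linarith [norm_sub_le (x n) (x (n + l)), hx n, hx (n + l)]
  · simpa only [Nat.add_right_comm _ 1] using hstep δ hδ

theorem norm_sub_sub_le_of_le {E : Type*} [SeminormedAddGroup E] {u v w : E} {α β : ℝ}
    (hv : ‖v‖ ≤ α) (hw : ‖w‖ ≤ β) : ‖u - v - w‖ ≤ ‖u‖ + α + β :=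
  (norm_sub_le _ _).trans (add_le_add ((norm_sub_le _ _).trans (add_le_add_right hv _)) hw)

section NormPow

variable {𝕜 : Type*} [NormedField 𝕜] {t : 𝕜}

theorem norm_pow_mul_le_of_norm_le_one (ht : ‖t‖ ≤ 1) (j : ℕ) (w : 𝕜) : ‖t ^ j * w‖ ≤ ‖w‖ := by
  rw [norm_mul, norm_pow]
  exact mul_le_of_le_one_left (norm_nonneg w) (pow_le_one₀ (norm_nonneg t) ht)

theorem norm_pow_add_mul_sub_pow_mul_le (ht : ‖t‖ ≤ 1) {y z : 𝕜} {M : ℝ} (hy : ‖y‖ ≤ M)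
    (hz : ‖z‖ ≤ M) (n k l : ℕ) : ‖t ^ (n + k) * (y - t ^ l * z)‖ ≤ ‖t‖ ^ n * (2 * M) := by
  have hyz : ‖y - t ^ l * z‖ ≤ 2 * M := by
    linarith [norm_sub_le y (t ^ l * z), norm_pow_mul_le_of_norm_le_one ht l z]
  rw [pow_add, mul_assoc]
  refine (norm_mul_le _ _).trans ?_
  rw [norm_pow]
  gcongr
  exact (norm_pow_mul_le_of_norm_le_one ht k _).trans hyz

end NormPow

theorem cauchy_step_general (q : ℝ) (hq0 : 0 < q) (hq1 : q < 1) (M : ℝ)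
    (c : ℕ → ℂ) (hc : Tendsto c atTop (nhds 1))
    (a : ℕ → ℕ → ℂ) (hbound : ∀ n k : ℕ, ‖a n k‖ ≤ M)
    (k : ℕ) (hk : 1 ≤ k)
    (hprev : ∃ L : ℂ, Tendsto (fun n => a n (k - 1)) atTop (nhds L))
    (N₀ : ℕ)
    (hrel : ∀ n : ℕ, N₀ ≤ n → ∀ l : ℕ,
      a (n + 1) k - a (n + l + 1) k
        = (q : ℂ) ^ k * (a n k - a (n + l) k)
          - (q : ℂ) ^ (n + k) * (a n (k - 1) - (q : ℂ) ^ l * a (n + l) (k - 1))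
          - (q : ℂ) ^ (2 * k - 1)
              * (c n * a (n - 1) (k - 1) - c (n + l) * a (n + l - 1) (k - 1))) :
    CauchySeq (fun n => a n k) := by
  obtain ⟨L, hL⟩ := hprev
  have hnorm_q : ‖(q : ℂ)‖ = q := by simp [hq0.le]
  have hq_le : ‖(q : ℂ)‖ ≤ 1 := hnorm_q.trans_le hq1.le
  have hg : CauchySeq fun n => c n * a (n - 1) (k - 1) := by
    simpa using (hc.mul (hL.comp (tendsto_sub_atTop_nat 1))).cauchySeq
  have hgeom : Tendsto (fun n => q ^ n * (2 * M)) atTop (nhds 0) := by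
    simpa using (tendsto_pow_atTop_nhds_zero_of_lt_one hq0.le hq1).mul_const (2 * M)
  refine cauchySeq_of_norm_sub_le_mul_add (r := q ^ k) (hbound · k) (by positivity)
    (pow_lt_one₀ hq0.le hq1 (by omega)) fun δ hδ => ?_
  filter_upwards [eventually_ge_atTop N₀, hgeom.eventually (ge_mem_nhds (half_pos hδ)),
    cauchySeq_iff_forall_eventually_norm_sub_add_le.1 hg (δ / 2) (half_pos hδ)]
    with n hn hqn hgn l
  rw [hrel n hn l]
  have hP := norm_pow_add_mul_sub_pow_mul_le hq_le (hbound n (k - 1)) (hbound (n + l) (k - 1))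
    n k l
  have hQ := norm_pow_mul_le_of_norm_le_one hq_le (2 * k - 1)
    (c n * a (n - 1) (k - 1) - c (n + l) * a (n + l - 1) (k - 1))
  rw [hnorm_q] at hP
  calc _ ≤ ‖(q : ℂ) ^ k * (a n k - a (n + l) k)‖ + δ / 2 + δ / 2 :=
        norm_sub_sub_le_of_le (hP.trans hqn) (hQ.trans (hgn l))
    _ = q ^ k * ‖a n k - a (n + l) k‖ + δ := by
        rw [norm_mul, norm_pow, hnorm_q]
        ring

/-- the inductive Cauchy-sequence step in the proof of Theorem 2.1.
If a bounded doubly-indexed family `a_{n,k}` satisfies the stated difference relation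
for all large `n` and all `l ≥ 0`, where `c(q,n) → 1` and `(a_{n,k-1})_n` converges,
then for fixed `k ≥ 1` the sequence `(a_{n,k})_n` is Cauchy, hence converges. -/
theorem cauchy_step (q : ℝ) (hq0 : 0 < q) (hq1 : q < 1) (M : ℝ) (hM : 0 < M)
    (c : ℕ → ℂ) (hc : Tendsto c atTop (nhds 1))
    (a : ℕ → ℕ → ℂ) (hbound : ∀ n k : ℕ, ‖a n k‖ ≤ M)
    (k : ℕ) (hk : 1 ≤ k)
    (hprev : ∃ L : ℂ, Tendsto (fun n => a n (k - 1)) atTop (nhds L))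
    (N₀ : ℕ) (hN₀ : 1 ≤ N₀)
    (hrel : ∀ n : ℕ, N₀ ≤ n → ∀ l : ℕ,
      a (n + 1) k - a (n + l + 1) k
        = (q : ℂ) ^ k * (a n k - a (n + l) k)
          - (q : ℂ) ^ (n + k) * (a n (k - 1) - (q : ℂ) ^ l * a (n + l) (k - 1))
          - (q : ℂ) ^ (2 * k - 1)
              * (c n * a (n - 1) (k - 1) - c (n + l) * a (n + l - 1) (k - 1))) :
    CauchySeq (fun n => a n k) :=
  cauchy_step_general q hq0 hq1 M c hc a hbound k hk hprev N₀ hrel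
end

section
/- For every complex s, the function F_q(z;s) = e^{i\pi s} \sum_{n=-\infty}^{\infty} (-1)^n q^{(n+s)^2} z^{n+s} / (q;q)_{n+s} satisfies the q-difference equation y(z) - y(qz) + q z y(q^2 z) = 0 (for z in a domain where z^s is defined, e.g., the cut plane). -/
/-- The infinite q-Pochhammer product `(a;q)_∞ = ∏_{n≥0} (1 - a qⁿ)`. -/
noncomputable def qPochInf (q : ℝ) (a : ℂ) : ℂ := ∏' n : ℕ, (1 - a * (q : ℂ) ^ n)

/-- The one-parameter family
`F_q(z;s) = e^{iπs} ∑_{n∈ℤ} (-1)ⁿ q^{(n+s)²} z^{n+s} / (q;q)_{n+s}`, where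
`1/(q;q)_{n+s} = (q^{n+s+1};q)_∞ / (q;q)_∞` and complex powers are principal. -/
noncomputable def Fq (q : ℝ) (z s : ℂ) : ℂ :=
  Complex.exp (Real.pi * Complex.I * s) *
    ∑' n : ℤ, (-1 : ℂ) ^ n * (q : ℂ) ^ (((n : ℂ) + s) ^ 2) * z ^ ((n : ℂ) + s)
      * qPochInf q ((q : ℂ) ^ ((n : ℂ) + s + 1)) / qPochInf q (q : ℂ)


/-! With `a = q^(n+s)`, the summand `T_z(n)` of `Fq q z s` satisfies `T_{qz}(n) = a T_z(n)`, and the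
recurrence `(a;q)_∞ = (1 - a) (aq;q)_∞` gives `q z T_{q²z}(n-1) = -(1 - a) T_z(n)`. Hence
`T_z(n) = T_{qz}(n) - q z T_{q²z}(n-1)` termwise, and summing over `n ∈ ℤ` yields the equation. The
bilateral series converge by the ratio test in both directions, because
`|T_z(n+1)| |1 - q a| = q |a|² |z| |T_z(n)|` and `|a| = q^(n + Re s)` tends to `0` as `n → ∞` and to
`∞` as `n → -∞`. -/

open Filter Topology

lemma multipliable_one_sub_mul_pow {q : ℂ} (hq : ‖q‖ < 1) (a : ℂ) :
    Multipliable fun n : ℕ => 1 - a * q ^ n := by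
  simpa only [sub_eq_add_neg] using
    Complex.multipliable_one_add_of_summable ((summable_geometric_of_norm_lt_one hq).mul_left a).neg

lemma qPochInf_eq_one_sub_mul {q : ℝ} (hq : |q| < 1) (a : ℂ) :
    qPochInf q a = (1 - a) * qPochInf q (a * q) := by
  have hq' : ‖(q : ℂ)‖ < 1 := by rwa [Complex.norm_real, Real.norm_eq_abs]
  rw [qPochInf, tprod_eq_zero_mul', qPochInf]
  · simp only [pow_zero, mul_one, pow_succ', mul_assoc]
  · simpa only [pow_succ', mul_assoc] using multipliable_one_sub_mul_pow hq' (a * q)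

lemma Complex.ofReal_mul_cpow {r : ℝ} (hr : 0 < r) (z c : ℂ) :
    ((r : ℂ) * z) ^ c = (r : ℂ) ^ c * z ^ c := by
  rcases eq_or_ne z 0 with rfl | hz
  · by_cases hc : c = 0 <;> simp [hc]
  have hr' : (r : ℂ) ≠ 0 := Complex.ofReal_ne_zero.mpr hr.ne'
  rw [Complex.cpow_def_of_ne_zero (mul_ne_zero hr' hz), Complex.cpow_def_of_ne_zero hr',
    Complex.cpow_def_of_ne_zero hz, Complex.log_ofReal_mul hr hz, add_mul, Complex.exp_add,
    Complex.ofReal_log hr.le]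

lemma Complex.cpow_add_one {x : ℂ} (hx : x ≠ 0) (w : ℂ) : x ^ (w + 1) = x ^ w * x := by
  rw [Complex.cpow_add _ _ hx, Complex.cpow_one]

lemma norm_ofReal_cpow_intCast_add {q : ℝ} (hq : 0 < q) (s : ℂ) (n : ℤ) :
    ‖(q : ℂ) ^ ((n : ℂ) + s)‖ = q ^ ((n : ℝ) + s.re) := by
  simp [Complex.norm_cpow_eq_rpow_re_of_pos hq]

lemma summable_int_of_norm_ratio_le {E : Type*} [SeminormedAddCommGroup E] [CompleteSpace E]
    {f : ℤ → E} {r : ℝ} (hr : r < 1) (htop : ∀ᶠ n in atTop, ‖f (n + 1)‖ ≤ r * ‖f n‖)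
    (hbot : ∀ᶠ n in atBot, ‖f n‖ ≤ r * ‖f (n + 1)‖) : Summable f := by
  refine Summable.of_nat_of_neg_add_one (summable_of_ratio_norm_eventually_le hr ?_)
    (summable_of_ratio_norm_eventually_le hr ?_)
  · filter_upwards [tendsto_natCast_atTop_atTop.eventually htop] with n hn
    simpa using hn
  · have : Tendsto (fun n : ℕ => -((n : ℤ) + 2)) atTop atBot :=
      tendsto_neg_atTop_atBot.comp (tendsto_atTop_add_const_right _ 2 tendsto_natCast_atTop_atTop)
    filter_upwards [this.eventually hbot] with n hn
    convert hn using 4 <;> push_cast <;> ring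

noncomputable def FqTerm (q : ℝ) (z s : ℂ) (n : ℤ) : ℂ :=
  (-1 : ℂ) ^ n * (q : ℂ) ^ (((n : ℂ) + s) ^ 2) * z ^ ((n : ℂ) + s)
    * qPochInf q ((q : ℂ) ^ ((n : ℂ) + s + 1)) / qPochInf q (q : ℂ)

lemma Fq_eq_tsum (q : ℝ) (z s : ℂ) :
    Fq q z s = Complex.exp (Real.pi * Complex.I * s) * ∑' n, FqTerm q z s n :=
  rfl

section

variable {q : ℝ} (hq0 : 0 < q) (hq1 : q < 1)

include hq0 in
lemma FqTerm_ofReal_mul (z s : ℂ) (n : ℤ) :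
    FqTerm q (q * z) s n = (q : ℂ) ^ ((n : ℂ) + s) * FqTerm q z s n := by
  simp only [FqTerm, Complex.ofReal_mul_cpow hq0]
  ring

include hq0 hq1 in
lemma FqTerm_succ_mul {z : ℂ} (hz : z ≠ 0) (s : ℂ) (n : ℤ) :
    FqTerm q z s (n + 1) * (1 - q * (q : ℂ) ^ ((n : ℂ) + s))
      = -(q * ((q : ℂ) ^ ((n : ℂ) + s)) ^ 2 * z) * FqTerm q z s n := by
  have hq : (q : ℂ) ≠ 0 := Complex.ofReal_ne_zero.mpr hq0.ne'
  have hsign : (-1 : ℂ) ^ (n + 1) = -(-1 : ℂ) ^ n := by rw [zpow_add_one₀ (by norm_num)]; ring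
  have hcast : ((n + 1 : ℤ) : ℂ) + s = (n : ℂ) + s + 1 := by push_cast; ring
  simp only [FqTerm, hsign, hcast]
  generalize (n : ℂ) + s = w
  have hq_sq : (q : ℂ) ^ ((w + 1) ^ 2) = (q : ℂ) ^ (w ^ 2) * q * ((q : ℂ) ^ w) ^ 2 := by
    rw [show (w + 1) ^ 2 = w ^ 2 + 1 + w + w by ring, Complex.cpow_add _ _ hq,
      Complex.cpow_add _ _ hq, Complex.cpow_add _ _ hq, Complex.cpow_one]
    ring
  have hpoch : qPochInf q ((q : ℂ) ^ (w + 1))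
      = (1 - q * (q : ℂ) ^ w) * qPochInf q ((q : ℂ) ^ (w + 1 + 1)) := by
    rw [qPochInf_eq_one_sub_mul (abs_lt.mpr ⟨by linarith, hq1⟩), Complex.cpow_add_one hq (w + 1),
      Complex.cpow_add_one hq w]
    ring_nf
  rw [hq_sq, Complex.cpow_add_one hz, hpoch]
  ring

include hq0 hq1 in
lemma FqTerm_eq_sub {z : ℂ} (hz : z ≠ 0) (s : ℂ) (n : ℤ) :
    FqTerm q z s n = FqTerm q (q * z) s n - q * z * FqTerm q (q ^ 2 * z) s (n - 1) := by
  have hq : (q : ℂ) ≠ 0 := Complex.ofReal_ne_zero.mpr hq0.ne'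
  have hrec := FqTerm_succ_mul hq0 hq1 hz s (n - 1)
  have hshift : (q : ℂ) * (q : ℂ) ^ (((n - 1 : ℤ) : ℂ) + s) = (q : ℂ) ^ ((n : ℂ) + s) := by
    rw [mul_comm, ← Complex.cpow_add_one hq]; push_cast; ring_nf
  rw [sub_add_cancel, hshift] at hrec
  rw [show (q : ℂ) ^ 2 * z = q * (q * z) by ring, FqTerm_ofReal_mul hq0, FqTerm_ofReal_mul hq0,
    FqTerm_ofReal_mul hq0]
  linear_combination hrec

include hq0 hq1 in
lemma norm_FqTerm_succ_mul {z : ℂ} (hz : z ≠ 0) (s : ℂ) (n : ℤ) :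
    ‖FqTerm q z s (n + 1)‖ * ‖1 - q * (q : ℂ) ^ ((n : ℂ) + s)‖
      = q * (q ^ ((n : ℝ) + s.re)) ^ 2 * ‖z‖ * ‖FqTerm q z s n‖ := by
  simpa [norm_ofReal_cpow_intCast_add hq0, abs_of_pos hq0] using
    congrArg norm (FqTerm_succ_mul hq0 hq1 hz s n)

include hq0 in
lemma norm_one_sub_ofReal_mul_cpow_le (s : ℂ) (n : ℤ) :
    ‖1 - q * (q : ℂ) ^ ((n : ℂ) + s)‖ ≤ 1 + q * q ^ ((n : ℝ) + s.re) := by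
  simpa [norm_ofReal_cpow_intCast_add hq0, abs_of_pos hq0] using
    norm_sub_le (1 : ℂ) (q * (q : ℂ) ^ ((n : ℂ) + s))

include hq0 in
lemma one_sub_le_norm_one_sub_ofReal_mul_cpow (s : ℂ) (n : ℤ) :
    1 - q * q ^ ((n : ℝ) + s.re) ≤ ‖1 - q * (q : ℂ) ^ ((n : ℂ) + s)‖ := by
  simpa [norm_ofReal_cpow_intCast_add hq0, abs_of_pos hq0] using
    norm_sub_norm_le (1 : ℂ) (q * (q : ℂ) ^ ((n : ℂ) + s))

include hq0 hq1 in
lemma eventually_norm_FqTerm_succ_le_half {z : ℂ} (hz : z ≠ 0) (s : ℂ) :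
    ∀ᶠ n in atTop, ‖FqTerm q z s (n + 1)‖ ≤ 1 / 2 * ‖FqTerm q z s n‖ := by
  have hu : Tendsto (fun n : ℤ => q ^ ((n : ℝ) + s.re)) atTop (𝓝 0) :=
    (tendsto_rpow_atTop_of_base_lt_one q (by linarith) hq1).comp
      (tendsto_atTop_add_const_right _ _ tendsto_intCast_atTop_atTop)
  have h1 : ∀ᶠ n : ℤ in atTop, q * q ^ ((n : ℝ) + s.re) ≤ 1 / 2 := by
    simpa using (hu.const_mul q).eventually (ge_mem_nhds (by norm_num : q * 0 < 1 / 2))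
  have h2 : ∀ᶠ n : ℤ in atTop, q * (q ^ ((n : ℝ) + s.re)) ^ 2 * ‖z‖ ≤ 1 / 4 := by
    simpa using ((hu.pow 2).const_mul q |>.mul_const ‖z‖).eventually
      (ge_mem_nhds (by norm_num : q * 0 ^ 2 * ‖z‖ < 1 / 4))
  filter_upwards [h1, h2] with n h1 h2
  have hlow := one_sub_le_norm_one_sub_ofReal_mul_cpow hq0 s n
  have hrec := norm_FqTerm_succ_mul hq0 hq1 hz s n
  nlinarith [norm_nonneg (FqTerm q z s (n + 1)), norm_nonneg (FqTerm q z s n)]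

include hq0 hq1 in
lemma eventually_norm_FqTerm_le_half_succ {z : ℂ} (hz : z ≠ 0) (s : ℂ) :
    ∀ᶠ n in atBot, ‖FqTerm q z s n‖ ≤ 1 / 2 * ‖FqTerm q z s (n + 1)‖ := by
  have hu : Tendsto (fun n : ℤ => q ^ ((n : ℝ) + s.re)) atBot atTop :=
    (tendsto_rpow_atBot_of_base_lt_one q hq0 hq1).comp
      (tendsto_atBot_add_const_right _ _ (tendsto_intCast_atBot_iff.2 tendsto_id))
  have hz' : 0 < ‖z‖ := norm_pos_iff.mpr hz
  filter_upwards [hu.eventually_ge_atTop 1, hu.eventually_ge_atTop (4 / (q * ‖z‖))]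
    with n hu1 hu2
  set u := q ^ ((n : ℝ) + s.re)
  have hup := norm_one_sub_ofReal_mul_cpow_le hq0 s n
  have hrec := norm_FqTerm_succ_mul hq0 hq1 hz s n
  have hlarge : 4 ≤ q * ‖z‖ * u := by rwa [div_le_iff₀' (by positivity)] at hu2
  have hdom : 2 * (1 + q * u) ≤ q * u ^ 2 * ‖z‖ := by nlinarith
  have hpos : 0 < q * u ^ 2 * ‖z‖ := by positivity
  refine le_of_mul_le_mul_left ?_ hpos
  nlinarith [norm_nonneg (FqTerm q z s (n + 1)), norm_nonneg (FqTerm q z s n)]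

include hq0 hq1 in
lemma summable_FqTerm {z : ℂ} (hz : z ≠ 0) (s : ℂ) : Summable (FqTerm q z s) :=
  summable_int_of_norm_ratio_le (by norm_num) (eventually_norm_FqTerm_succ_le_half hq0 hq1 hz s)
    (eventually_norm_FqTerm_le_half_succ hq0 hq1 hz s)

end

/-- for every complex `s`, the function `F_q(·;s)` satisfies the
q-difference equation `y(z) - y(qz) + q z y(q² z) = 0` on the cut plane. -/
theorem Fq_q_difference (q : ℝ) (hq0 : 0 < q) (hq1 : q < 1) (s : ℂ)
    (z : ℂ) (hz : z ∈ Complex.slitPlane) :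
    Fq q z s - Fq q ((q : ℂ) * z) s + (q : ℂ) * z * Fq q ((q : ℂ) ^ 2 * z) s = 0 := by
  have hz0 : z ≠ 0 := Complex.slitPlane_ne_zero hz
  have hq : (q : ℂ) ≠ 0 := Complex.ofReal_ne_zero.mpr hq0.ne'
  have hqz := (summable_FqTerm hq0 hq1 (mul_ne_zero hq hz0) s).hasSum
  have hq2z := ((Equiv.subRight (1 : ℤ)).hasSum_iff.mpr
    (summable_FqTerm hq0 hq1 (mul_ne_zero (pow_ne_zero 2 hq) hz0) s).hasSum)
  have hsum : HasSum (FqTerm q z s) (∑' n, FqTerm q (q * z) s n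
      - q * z * ∑' n, FqTerm q (q ^ 2 * z) s n) := by
    rw [funext (FqTerm_eq_sub hq0 hq1 hz0 s)]
    exact hqz.sub (hq2z.mul_left _)
  rw [Fq_eq_tsum, Fq_eq_tsum, Fq_eq_tsum, hsum.tsum_eq]
  ring
end

section
/- If a sequence of polynomials s_n in 1/t^2 is uniformly bounded by M on the circle |t| = \rho and satisfies s_{n+1}(q^{1/2}t) = (1 - q^n/t^2)s_n(t) - t^{-2}c(q,n)s_{n-1}(q^{-1/2}t) with |c(q,n)| \leq K, then for every k \geq 1, \max_{|t| \geq q^{k/2}\rho} |s_n(t)| \leq M \prod_{j=1}^k (1 + (1+K)/(\rho^2 q^{j-1})) for all n \geq k+1; consequently (s_n) is uniformly bounded on each compact subset of \mathbb{C} \setminus \{0\} (together with boundedness near \infty by the maximum principle). -/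
open Finset

/-- Also at `z = 0`: there `0⁻¹ = 0` and `x / 0 = 0` make `sFun q c n 0` the constant term of
`s_n` as a polynomial in `1/u²`. -/
theorem differentiable_sFun_inv (q : ℝ) (c : ℕ → ℂ) :
    ∀ n, Differentiable ℂ fun z : ℂ => sFun q c n z⁻¹
  | 0 => by simp only [sFun]; fun_prop
  | 1 => by simp only [sFun, inv_pow, div_inv_eq_mul]; fun_prop
  | n + 2 => by
    have h₁ : Differentiable ℂ fun z : ℂ => sFun q c (n + 1) (Real.sqrt q * z)⁻¹ :=
      (differentiable_sFun_inv q c (n + 1)).comp (differentiable_id.const_mul _)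
    have h₀ : Differentiable ℂ fun z : ℂ => sFun q c n (q * z)⁻¹ :=
      (differentiable_sFun_inv q c n).comp (differentiable_id.const_mul _)
    simp only [sFun, inv_pow, div_inv_eq_mul, ← mul_inv]
    fun_prop

theorem norm_le_of_forall_norm_eq_le_of_differentiable_inv {E : Type*} [NormedAddCommGroup E]
    [NormedSpace ℂ E] {f : ℂ → E} (hf : Differentiable ℂ fun z => f z⁻¹) {r C : ℝ} (hr : 0 < r)
    (hC : ∀ v : ℂ, ‖v‖ = r → ‖f v‖ ≤ C) {u : ℂ} (hu : r ≤ ‖u‖) : ‖f u‖ ≤ C := by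
  have hr' : r⁻¹ ≠ 0 := (inv_pos.mpr hr).ne'
  simpa using Complex.norm_le_of_forall_mem_frontier_norm_le Metric.isBounded_ball
    hf.diffContOnCl (C := C) (U := Metric.ball 0 r⁻¹) (z := u⁻¹)
    (fun z hz => by
      rw [frontier_ball _ hr', mem_sphere_zero_iff_norm] at hz
      simpa using hC z⁻¹ (by rw [norm_inv, hz, inv_inv]))
    (by rw [closure_ball _ hr', mem_closedBall_zero_iff, norm_inv]; exact inv_anti₀ hr hu)

section Recurrence

variable {q K : ℝ} {c : ℕ → ℂ}

theorem norm_one_sub_pow_div_sq_le (hq0 : 0 ≤ q) (hq1 : q ≤ 1) {m : ℕ} (hm : m ≠ 0) (t : ℂ) :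
    ‖1 - (q : ℂ) ^ m / t ^ 2‖ ≤ 1 + q / ‖t‖ ^ 2 := by
  calc ‖1 - (q : ℂ) ^ m / t ^ 2‖ ≤ 1 + q ^ m / ‖t‖ ^ 2 := (norm_sub_le _ _).trans_eq <| by
        rw [norm_one, norm_div, norm_pow, norm_pow, Complex.norm_of_nonneg hq0]
    _ ≤ 1 + q / ‖t‖ ^ 2 := by gcongr; exact pow_le_of_le_one hq0 hq1 hm

theorem norm_sFun_le_of_forall_norm_le (hq0 : 0 ≤ q) (hq1 : q ≤ 1) (hc : ∀ n, ‖c n‖ ≤ K)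
    {B : ℝ} {t : ℂ} (h₁ : ∀ n, ‖sFun q c n ((Real.sqrt q : ℂ)⁻¹ * t)‖ ≤ B)
    (h₀ : ∀ n, ‖sFun q c n ((q : ℂ)⁻¹ * t)‖ ≤ B) (n : ℕ) :
    ‖sFun q c n t‖ ≤ B * (1 + (1 + K) * (q / ‖t‖ ^ 2)) := by
  have hK : 0 ≤ K := (norm_nonneg _).trans (hc 0)
  have hB : 1 ≤ B := by simpa [sFun] using h₁ 0
  have ha : 0 ≤ q / ‖t‖ ^ 2 := by positivity
  have hKa : 0 ≤ (1 + K) * (q / ‖t‖ ^ 2) := by positivity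
  match n with
  | 0 => simp only [sFun, norm_one]; nlinarith
  | 1 =>
    calc ‖sFun q c 1 t‖ = ‖1 - (q : ℂ) ^ 1 / t ^ 2‖ := by rw [pow_one]; rfl
      _ ≤ 1 + q / ‖t‖ ^ 2 := norm_one_sub_pow_div_sq_le hq0 hq1 one_ne_zero t
      _ ≤ B * (1 + (1 + K) * (q / ‖t‖ ^ 2)) := by nlinarith
  | n + 2 =>
    have hcoeff : ‖(q : ℂ) / t ^ 2 * c (n + 1)‖ ≤ q / ‖t‖ ^ 2 * K := by
      rw [norm_mul, norm_div, norm_pow, Complex.norm_of_nonneg hq0]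
      gcongr
      exact hc _
    calc ‖sFun q c (n + 2) t‖
        ≤ ‖1 - (q : ℂ) ^ (n + 2) / t ^ 2‖ * ‖sFun q c (n + 1) ((Real.sqrt q : ℂ)⁻¹ * t)‖
          + ‖(q : ℂ) / t ^ 2 * c (n + 1)‖ * ‖sFun q c n ((q : ℂ)⁻¹ * t)‖ := by
          rw [← norm_mul, ← norm_mul]; exact norm_sub_le _ _
      _ ≤ (1 + q / ‖t‖ ^ 2) * B + q / ‖t‖ ^ 2 * K * B := by
          gcongr
          · exact norm_one_sub_pow_div_sq_le hq0 hq1 (by omega) t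
          · exact h₁ _
          · exact h₀ _
      _ = B * (1 + (1 + K) * (q / ‖t‖ ^ 2)) := by ring

theorem norm_sFun_le_of_forall_le_norm (hq0 : 0 < q) (hq1 : q ≤ 1) (hc : ∀ n, ‖c n‖ ≤ K)
    {r B : ℝ} (hr : 0 < r) (h : ∀ n (u : ℂ), r ≤ ‖u‖ → ‖sFun q c n u‖ ≤ B) (n : ℕ) {t : ℂ}
    (ht : Real.sqrt q * r ≤ ‖t‖) : ‖sFun q c n t‖ ≤ B * (1 + (1 + K) / r ^ 2) := by
  have hs0 : 0 < Real.sqrt q := Real.sqrt_pos.mpr hq0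
  have hqs : q ≤ Real.sqrt q := Real.le_sqrt_self_iff.mpr hq1
  have h₁ : r ≤ ‖(Real.sqrt q : ℂ)⁻¹ * t‖ := by
    rw [norm_mul, norm_inv, Complex.norm_of_nonneg hs0.le, inv_mul_eq_div, le_div_iff₀' hs0]
    exact ht
  have h₀ : r ≤ ‖(q : ℂ)⁻¹ * t‖ := by
    rw [norm_mul, norm_inv, Complex.norm_of_nonneg hq0.le, inv_mul_eq_div, le_div_iff₀' hq0]
    nlinarith
  have htpos : 0 < ‖t‖ := lt_of_lt_of_le (by positivity) ht
  have hqt : q / ‖t‖ ^ 2 ≤ 1 / r ^ 2 := by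
    rw [div_le_div_iff₀ (by positivity) (by positivity)]
    nlinarith [Real.sq_sqrt hq0.le, mul_self_le_mul_self (by positivity) ht]
  have hB : 0 ≤ B := (norm_nonneg _).trans (h 0 _ h₁)
  have hK : 0 ≤ K := (norm_nonneg _).trans (hc 0)
  calc ‖sFun q c n t‖ ≤ B * (1 + (1 + K) * (q / ‖t‖ ^ 2)) :=
        norm_sFun_le_of_forall_norm_le hq0.le hq1 hc (fun n => h n _ h₁) (fun n => h n _ h₀) n
    _ ≤ B * (1 + (1 + K) * (1 / r ^ 2)) := by gcongr
    _ = B * (1 + (1 + K) / r ^ 2) := by ring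

end Recurrence

theorem norm_sFun_le_prod {q ρ M K : ℝ} {c : ℕ → ℂ} (hq0 : 0 < q) (hq1 : q ≤ 1) (hρ : 0 < ρ)
    (hc : ∀ n, ‖c n‖ ≤ K) (hbound : ∀ n (t : ℂ), ‖t‖ = ρ → ‖sFun q c n t‖ ≤ M) (k n : ℕ) {t : ℂ}
    (ht : Real.sqrt q ^ k * ρ ≤ ‖t‖) :
    ‖sFun q c n t‖ ≤ M * ∏ j ∈ range k, (1 + (1 + K) / (ρ ^ 2 * q ^ j)) := by
  induction k generalizing n t with
  | zero =>
    simpa using norm_le_of_forall_norm_eq_le_of_differentiable_inv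
      (differentiable_sFun_inv q c n) hρ (hbound n) (by simpa using ht)
  | succ k ih =>
    have hr : ρ ^ 2 * q ^ k = (Real.sqrt q ^ k * ρ) ^ 2 := by
      rw [mul_pow, ← pow_mul, mul_comm k, pow_mul, Real.sq_sqrt hq0.le, mul_comm]
    rw [prod_range_succ, ← mul_assoc, hr]
    exact norm_sFun_le_of_forall_le_norm hq0 hq1 hc (by positivity) (fun n _ hu => ih n hu) n
      (by rwa [← mul_assoc, ← pow_succ'])

theorem IsClosed.exists_pos_le_norm {E : Type*} [SeminormedAddCommGroup E] {C : Set E}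
    (hC : IsClosed C) (h0 : (0 : E) ∉ C) : ∃ ε > 0, ∀ t ∈ C, ε ≤ ‖t‖ := by
  obtain ⟨ε, hε, hball⟩ := Metric.isOpen_iff.mp hC.isOpen_compl 0 h0
  exact ⟨ε, hε, fun t ht => not_lt.mp fun h => hball (mem_ball_zero_iff.mpr h) ht⟩

theorem sFun_normal_family_general (q : ℝ) (hq0 : 0 < q) (hq1 : q < 1)
    (ρ M K : ℝ) (hρ : 0 < ρ)
    (c : ℕ → ℂ) (hc : ∀ n, ‖c n‖ ≤ K)
    (hbound : ∀ n : ℕ, ∀ t : ℂ, ‖t‖ = ρ → ‖sFun q c n t‖ ≤ M) :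
    (∀ k : ℕ, 1 ≤ k → ∀ n : ℕ, k + 1 ≤ n → ∀ t : ℂ,
      (Real.sqrt q) ^ k * ρ ≤ ‖t‖ →
        ‖sFun q c n t‖
          ≤ M * ∏ j ∈ Finset.range k, (1 + (1 + K) / (ρ ^ 2 * q ^ j))) ∧
    ∀ C : Set ℂ, IsCompact C → (0 : ℂ) ∉ C →
      ∃ B : ℝ, ∀ n : ℕ, ∀ t ∈ C, ‖sFun q c n t‖ ≤ B := by
  have hbound_prod := norm_sFun_le_prod hq0 hq1.le hρ hc hbound
  refine ⟨fun k _ n _ t ht => hbound_prod k n ht, fun C hC hC0 => ?_⟩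
  obtain ⟨ε, hε, hεC⟩ := hC.isClosed.exists_pos_le_norm hC0
  have hs1 : Real.sqrt q < 1 := (Real.sqrt_lt' one_pos).mpr (by rwa [one_pow])
  obtain ⟨k, hk⟩ := exists_pow_lt_of_lt_one (div_pos hε hρ) hs1
  exact ⟨_, fun n t htC => hbound_prod k n
    (((lt_div_iff₀ hρ).mp hk).le.trans (hεC t htC))⟩

/-- Lemma 3.1: if the `s_n` are uniformly bounded by `M` on `|t| = ρ`
and `|c(q,n)| ≤ K`, then for every `k ≥ 1`,
`max_{|t| ≥ q^{k/2}ρ} |s_n(t)| ≤ M ∏_{j=1}^k (1 + (1+K)/(ρ² q^{j-1}))` for all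
`n ≥ k+1`; consequently `(s_n)` is uniformly bounded on every compact subset of
`ℂ \ {0}`. -/
theorem sFun_normal_family (q : ℝ) (hq0 : 0 < q) (hq1 : q < 1)
    (ρ M K : ℝ) (hρ : 0 < ρ) (hM : 0 < M) (hK : 0 < K)
    (c : ℕ → ℂ) (hc : ∀ n, ‖c n‖ ≤ K)
    (hbound : ∀ n : ℕ, ∀ t : ℂ, ‖t‖ = ρ → ‖sFun q c n t‖ ≤ M) :
    (∀ k : ℕ, 1 ≤ k → ∀ n : ℕ, k + 1 ≤ n → ∀ t : ℂ,
      (Real.sqrt q) ^ k * ρ ≤ ‖t‖ →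
        ‖sFun q c n t‖
          ≤ M * ∏ j ∈ Finset.range k, (1 + (1 + K) / (ρ ^ 2 * q ^ j))) ∧
    ∀ C : Set ℂ, IsCompact C → (0 : ℂ) ∉ C →
      ∃ B : ℝ, ∀ n : ℕ, ∀ t ∈ C, ‖sFun q c n t‖ ≤ B :=
  sFun_normal_family_general q hq0 hq1 ρ M K hρ c hc hbound
end
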